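/- Let F* be the set of all φ_A-implicational walks and F the set of all φ_A-conflicting walks for a set of 0/1/all constraints C and partial assignment φ_A. Then the pair (F, F*) is nice: (1) F ⊆ F*; (2) F* is closed under taking prefixes; (3) the relation P ≡ Q (defined for P, Q ∈ F* ending at the same vertex by P∘Q⁻¹ ∉ F) is an equivalence relation; (4) for equivalent walks P ≡ Q ending at u and any edge uv, P∘uv ∈ F* iff Q∘uv ∈ F*. -/

import Mathlib

/-- A 0/1/all constraint between two domains: either a permutation
constraint (given by a bijection) or a two-fan constraint `(φ(u)=a) ∨ (φ(v)=b)`. -/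
inductive ZOA (α β : Type) : Type where
  | perm (π : α ≃ β)
  | twofan (a : α) (b : β)

-- Unit propagation: fixing the first variable to `p`, the set of allowed values of the
-- second variable is either everything (`none`, i.e. "all") or a singleton (`some q`).
open Classical in
noncomputable def ZOA.propg {α β : Type} : ZOA α β → α → Option β
  | .perm π, p => some (π p)
  | .twofan a b, p => if p = a then none else some b

/-- The reversed constraint on the opposite directed edge. -/
def ZOA.rev {α β : Type} : ZOA α β → ZOA β α
  | .perm π => .perm π.symm
  | .twofan a b => .twofan b a

/-- Satisfaction of a 0/1/all constraint by a pair of values. -/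
def ZOA.Sat {α β : Type} : ZOA α β → α → β → Prop
  | .perm π, x, y => π x = y
  | .twofan a b, x, y => x = a ∨ y = b

/-- Walks in the primal graph given by an adjacency relation. -/
inductive Wk {V : Type} (adj : V → V → Prop) : V → V → Type where
  | nil (v : V) : Wk adj v v
  | cons {u v w : V} (h : adj u v) (p : Wk adj v w) : Wk adj u w

/-- Concatenation of walks. -/
def Wk.app {V : Type} {adj : V → V → Prop} :
    ∀ {u v w : V}, Wk adj u v → Wk adj v w → Wk adj u w
  | _, _, _, .nil _, q => q
  | _, _, _, .cons h p, q => .cons h (Wk.app p q)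

/-- Reversal of a walk (uses symmetry of the adjacency relation). -/
def Wk.rev {V : Type} {adj : V → V → Prop} (hs : ∀ u v : V, adj u v → adj v u) :
    ∀ {u v : V}, Wk adj u v → Wk adj v u
  | _, _, .nil x => .nil x
  | _, _, .cons h p => Wk.app (Wk.rev hs p) (.cons (hs _ _ h) (.nil _))

/-- The list of vertices of a walk, in order (with multiplicity). -/
def Wk.support {V : Type} {adj : V → V → Prop} : ∀ {u w : V}, Wk adj u w → List V
  | _, _, .nil x => [x]
  | u, _, .cons _ p => u :: p.support

/-- Appending a single edge at the end of a walk. -/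
def Wk.ext {V : Type} {adj : V → V → Prop} {s u t : V}
    (P : Wk adj s u) (h : adj u t) : Wk adj s t :=
  P.app (.cons h (.nil t))

/-- Unit propagation along a walk: `none` means "all" (no restriction), and "all" is
absorbing. -/
noncomputable def runW {V : Type} {adj : V → V → Prop} {D : V → Type}
    (C : ∀ u v : V, adj u v → ZOA (D u) (D v)) :
    ∀ {u w : V}, Wk adj u w → D u → Option (D w)
  | _, _, .nil _, p => some p
  | _, _, .cons h q, p => ((C _ _ h).propg p).bind (runW C q)

/-- A walk is `φ_A`-implicational if it starts in `A` and unit propagation along it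
from the assigned value yields a value (not "all"). -/
def Impl {V : Type} {adj : V → V → Prop} {D : V → Type}
    (C : ∀ u v : V, adj u v → ZOA (D u) (D v)) (A : Set V) (φ : ∀ v ∈ A, D v)
    {s t : V} (W : Wk adj s t) : Prop :=
  ∃ hs : s ∈ A, (runW C W (φ s hs)).isSome

/-- A walk is `φ_A`-conflicting if it is implicational, ends in `A`, and its implied
value differs from the assigned value of its endpoint. -/
def Confl {V : Type} {adj : V → V → Prop} {D : V → Type}
    (C : ∀ u v : V, adj u v → ZOA (D u) (D v)) (A : Set V) (φ : ∀ v ∈ A, D v)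
    {s t : V} (W : Wk adj s t) : Prop :=
  ∃ (hs : s ∈ A) (ht : t ∈ A) (q : D t),
    runW C W (φ s hs) = some q ∧ q ≠ φ t ht

/-- A pair `(F, F*)` of sets of walks is *nice* if: `F ⊆ F*`; `F*` is closed under
taking prefixes; the relation `P ≡ Q` (for `P, Q ∈ F*` ending at the same vertex,
defined by `P ∘ Q⁻¹ ∉ F`) is an equivalence relation; and equivalent walks can be
extended by an edge inside `F*` in the same ways. -/
structure IsNice {V : Type} {adj : V → V → Prop}
    (hs : ∀ u v : V, adj u v → adj v u)
    (F Fstar : ∀ u v : V, Wk adj u v → Prop) : Prop where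
  sub : ∀ u v (W : Wk adj u v), F u v W → Fstar u v W
  prefix_closed : ∀ u v w (P : Wk adj u v) (Q : Wk adj v w),
    Fstar u w (P.app Q) → Fstar u v P
  refl : ∀ u t (P : Wk adj u t), Fstar u t P → ¬ F u u (P.app (P.rev hs))
  symm : ∀ u v t (P : Wk adj u t) (Q : Wk adj v t), Fstar u t P → Fstar v t Q →
    ¬ F u v (P.app (Q.rev hs)) → ¬ F v u (Q.app (P.rev hs))
  trans : ∀ u v w t (P : Wk adj u t) (Q : Wk adj v t) (R : Wk adj w t),
    Fstar u t P → Fstar v t Q → Fstar w t R →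
    ¬ F u v (P.app (Q.rev hs)) → ¬ F v w (Q.app (R.rev hs)) →
    ¬ F u w (P.app (R.rev hs))
  ext : ∀ u v t t' (P : Wk adj u t) (Q : Wk adj v t) (h : adj t t'),
    Fstar u t P → Fstar v t Q → ¬ F u v (P.app (Q.rev hs)) →
    (Fstar u t' (P.ext h) ↔ Fstar v t' (Q.ext h))

/-!
Unit propagation along a 0/1/all constraint can be undone: if it sends `p` to `q`, then
propagating back from `q` yields "all" or `p`, while propagating back from any `x ≠ q` yields
a single value different from `p`. Along walks this says that for implicational walks `P`
and `Q` ending at `t`, the walk `P ∘ Q⁻¹` is conflicting exactly when `P` and `Q` imply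
different values at `t`. So `≡` is equality of implied values, an equivalence relation, and
whether `P ∘ uv` is implicational depends only on the value `P` implies at `u`.
-/

namespace ZOA

variable {α β : Type} {p : α} {q : β}

theorem propg_rev_of_propg_eq (e : ZOA α β) (h : e.propg p = some q) :
    e.rev.propg q = none ∨ e.rev.propg q = some p := by
  classical
  cases e with
  | perm π =>
    obtain rfl : π p = q := Option.some.inj h
    simp [ZOA.propg, ZOA.rev]
  | twofan a b =>
    by_cases hp : p = a
    · simp [ZOA.propg, hp] at h
    · obtain rfl : b = q := by simpa [ZOA.propg, hp] using h
      simp [ZOA.propg, ZOA.rev]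

theorem exists_propg_rev_ne_of_propg_eq (e : ZOA α β) {x : β} (h : e.propg p = some q)
    (hx : x ≠ q) : ∃ y, e.rev.propg x = some y ∧ y ≠ p := by
  classical
  cases e with
  | perm π =>
    obtain rfl : π p = q := Option.some.inj h
    exact ⟨π.symm x, rfl, fun hy => hx (by rw [← hy, Equiv.apply_symm_apply])⟩
  | twofan a b =>
    by_cases hp : p = a
    · simp [ZOA.propg, hp] at h
    · obtain rfl : b = q := by simpa [ZOA.propg, hp] using h
      exact ⟨a, by simp [ZOA.propg, ZOA.rev, hx], Ne.symm hp⟩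

end ZOA

section Propagation

variable {V : Type} {adj : V → V → Prop} {D : V → Type}
  (C : ∀ u v : V, adj u v → ZOA (D u) (D v))

theorem runW_app {u v w : V} (P : Wk adj u v) (Q : Wk adj v w) (p : D u) :
    runW C (P.app Q) p = (runW C P p).bind (runW C Q) := by
  induction P with
  | nil => rfl
  | cons h P ih =>
    simp only [Wk.app, runW]
    cases (C _ _ h).propg p <;> simp [ih]

theorem runW_ext {u v w : V} (P : Wk adj u v) (h : adj v w) (p : D u) :
    runW C (P.ext h) p = (runW C P p).bind ((C v w h).propg) := by
  rw [Wk.ext, runW_app]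
  congr 1
  funext q
  simp [runW]

variable (hsym : ∀ u v : V, adj u v → adj v u)
  (hcompat : ∀ u v (h : adj u v), C v u (hsym u v h) = (C u v h).rev)
include hcompat

theorem runW_rev_of_runW_eq {u w : V} (W : Wk adj u w) {p : D u} {q : D w}
    (h : runW C W p = some q) :
    runW C (W.rev hsym) q = none ∨ runW C (W.rev hsym) q = some p := by
  induction W with
  | nil => exact .inr (by simpa [Wk.rev, runW] using h.symm)
  | cons he P ih =>
    obtain ⟨m, hm, hP⟩ := Option.bind_eq_some_iff.mp h
    simp only [Wk.rev, runW_app]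
    rcases ih hP with h0 | h1
    · simp [h0]
    · simp only [h1, Option.bind_some, runW, hcompat _ _ he]
      rcases ZOA.propg_rev_of_propg_eq _ hm with h2 | h2 <;> simp [h2]

theorem exists_runW_rev_ne_of_runW_eq {u w : V} (W : Wk adj u w) {p : D u} {q x : D w}
    (h : runW C W p = some q) (hx : x ≠ q) :
    ∃ y, runW C (W.rev hsym) x = some y ∧ y ≠ p := by
  induction W with
  | nil => exact ⟨x, rfl, Option.some.inj h ▸ hx⟩
  | cons he P ih =>
    obtain ⟨m, hm, hP⟩ := Option.bind_eq_some_iff.mp h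
    obtain ⟨y', hy', hy'm⟩ := ih hP hx
    obtain ⟨y, hy, hyp⟩ := ZOA.exists_propg_rev_ne_of_propg_eq _ hm hy'm
    refine ⟨y, ?_, hyp⟩
    simp [Wk.rev, runW_app, hy', runW, hcompat _ _ he, hy]

end Propagation

section WalkClasses

variable {V : Type} {adj : V → V → Prop} {D : V → Type}
  {C : ∀ u v : V, adj u v → ZOA (D u) (D v)} {A : Set V} {φ : ∀ v ∈ A, D v}

theorem Impl.exists_runW_eq {s t : V} {W : Wk adj s t} (hW : Impl C A φ W) :
    ∃ hs q, runW C W (φ s hs) = some q :=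
  ⟨hW.1, Option.isSome_iff_exists.mp hW.2⟩

theorem Confl.impl {s t : V} {W : Wk adj s t} (hW : Confl C A φ W) : Impl C A φ W := by
  obtain ⟨hs, -, q, hq, -⟩ := hW
  exact ⟨hs, by simp [hq]⟩

theorem Impl.of_app {u v w : V} {P : Wk adj u v} {Q : Wk adj v w}
    (hPQ : Impl C A φ (P.app Q)) : Impl C A φ P := by
  obtain ⟨hu, hsome⟩ := hPQ
  rw [runW_app] at hsome
  exact ⟨hu, Option.isSome_of_isSome_bind hsome⟩

theorem impl_ext_iff {u t t' : V} {P : Wk adj u t} (h : adj t t') (hu : u ∈ A) {q : D t}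
    (hP : runW C P (φ u hu) = some q) :
    Impl C A φ (P.ext h) ↔ ((C t t' h).propg q).isSome := by
  simp [Impl, hu, runW_ext, hP]

theorem not_confl_app_rev_iff (hsym : ∀ u v : V, adj u v → adj v u)
    (hcompat : ∀ u v (h : adj u v), C v u (hsym u v h) = (C u v h).rev)
    {u v t : V} {P : Wk adj u t} {Q : Wk adj v t} (hu : u ∈ A) (hv : v ∈ A) {qP qQ : D t}
    (hP : runW C P (φ u hu) = some qP) (hQ : runW C Q (φ v hv) = some qQ) :
    ¬ Confl C A φ (P.app (Q.rev hsym)) ↔ qP = qQ := by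
  constructor
  · intro hnc
    by_contra hne
    obtain ⟨y, hy, hyv⟩ := exists_runW_rev_ne_of_runW_eq C hsym hcompat Q hQ hne
    exact hnc ⟨hu, hv, y, by rw [runW_app, hP, Option.bind_some, hy], hyv⟩
  · rintro rfl ⟨_, _, y, hy, hyv⟩
    rw [runW_app, hP, Option.bind_some] at hy
    rcases runW_rev_of_runW_eq C hsym hcompat Q hQ with h | h <;> rw [h] at hy
    · cases hy
    · exact hyv (Option.some.inj hy).symm

end WalkClasses

/-- for a set of 0/1/all constraints `C` and a partial assignment
`φ_A`, the pair `(F, F*)` where `F` is the set of conflicting walks and `F*` the set of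
implicational walks is nice. -/
theorem confl_impl_isNice
    {V : Type} {adj : V → V → Prop} {D : V → Type}
    (hsym : ∀ u v : V, adj u v → adj v u)
    (C : ∀ u v : V, adj u v → ZOA (D u) (D v))
    (hcompat : ∀ u v (h : adj u v), C v u (hsym u v h) = (C u v h).rev)
    (A : Set V) (φ : ∀ v ∈ A, D v) :
    IsNice hsym (fun u v (W : Wk adj u v) => Confl C A φ W)
      (fun u v (W : Wk adj u v) => Impl C A φ W) := by
  have key := @not_confl_app_rev_iff V adj D C A φ hsym hcompat
  refine ⟨fun _ _ _ => Confl.impl, fun _ _ _ _ _ => Impl.of_app, ?refl, ?symm, ?trans, ?ext⟩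
  case refl =>
    intro u t P hP
    obtain ⟨hu, q, hq⟩ := hP.exists_runW_eq
    exact (key hu hu hq hq).mpr rfl
  case symm =>
    intro u v t P Q hP hQ hPQ
    obtain ⟨hu, qP, hqP⟩ := hP.exists_runW_eq
    obtain ⟨hv, qQ, hqQ⟩ := hQ.exists_runW_eq
    exact (key hv hu hqQ hqP).mpr ((key hu hv hqP hqQ).mp hPQ).symm
  case trans =>
    intro u v w t P Q R hP hQ hR hPQ hQR
    obtain ⟨hu, qP, hqP⟩ := hP.exists_runW_eq
    obtain ⟨hv, qQ, hqQ⟩ := hQ.exists_runW_eq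
    obtain ⟨hw, qR, hqR⟩ := hR.exists_runW_eq
    exact (key hu hw hqP hqR).mpr
      (((key hu hv hqP hqQ).mp hPQ).trans ((key hv hw hqQ hqR).mp hQR))
  case ext =>
    intro u v t t' P Q h hP hQ hPQ
    obtain ⟨hu, qP, hqP⟩ := hP.exists_runW_eq
    obtain ⟨hv, qQ, hqQ⟩ := hQ.exists_runW_eq
    rw [impl_ext_iff h hu hqP, impl_ext_iff h hv hqQ, (key hu hv hqP hqQ).mp hPQ]
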